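/- arXiv:2303.02546 — 2 statements merged into one kernel-verified Lean document; each statement's English description precedes it below -/
import Mathlib

section
/- Let u, k be vectors in ℝ³ with k ≠ 0, and let v range over all vectors with fixed norm b and fixed inner product ⟨v, k⟩ = a. Then the inner product ⟨u, v⟩ is maximized at a vector v* whose projection onto the plane orthogonal to k is a nonnegative scalar multiple of the projection of u onto that plane (assuming the projection of u onto the plane is nonzero and the constraint set is nonempty with b² > a²/‖k‖²). -/
/-!
All admissible `v` share the axial component `v - proj k v = (a / ‖k‖ ^ 2) • k`, hence, by
Pythagoras, also the length `r` of their planar component `proj k v`. Thus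
`⟪u, v⟫ = ⟪u, v - proj k v⟫ + ⟪proj k u, proj k v⟫` is bounded by a constant plus `r * ‖proj k u‖`
(Cauchy–Schwarz), with equality when `proj k v` is the nonnegative multiple of `proj k u` of
length `r`; twisting any admissible vector about `k` produces such a maximiser.
-/

open scoped RealInnerProductSpace

noncomputable section

/-- 3-dimensional Euclidean space. -/
abbrev V := EuclideanSpace ℝ (Fin 3)

/-- Projection of `x` onto the plane with normal `k`. -/
def proj (k x : V) : V := x - (⟪x, k⟫ / ‖k‖ ^ 2) • k

/-- `R` is a rotation about the axis `k`: an orientation-preserving linear isometry fixing `k`. -/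
def IsRotationAbout (k : V) (R : V ≃ₗᵢ[ℝ] V) : Prop :=
  R k = k ∧ LinearMap.det (R.toLinearEquiv : V →ₗ[ℝ] V) = 1

/-- The cross product on `ℝ³`. -/
def cross (x y : V) : V :=
  (EuclideanSpace.equiv (Fin 3) ℝ).symm
    (crossProduct ((EuclideanSpace.equiv (Fin 3) ℝ) x) ((EuclideanSpace.equiv (Fin 3) ℝ) y))

/-- The rotation angle of a rotation in `SO(3)`, recovered from its trace. -/
def rotAngle (R : V ≃ₗᵢ[ℝ] V) : ℝ :=
  Real.arccos ((LinearMap.trace ℝ V (R.toLinearEquiv : V →ₗ[ℝ] V) - 1) / 2)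

section Twist

variable {k : V}

theorem sub_proj (x : V) : x - proj k x = (⟪x, k⟫ / ‖k‖ ^ 2) • k := by
  simp only [proj, sub_sub_cancel]

theorem inner_proj_left_self (x : V) : ⟪proj k x, k⟫ = 0 := by
  rcases eq_or_ne k 0 with rfl | hk
  · exact inner_zero_right _
  · have : ‖k‖ ≠ 0 := norm_ne_zero_iff.mpr hk
    rw [proj, inner_sub_left, real_inner_smul_left, real_inner_self_eq_norm_sq]
    field_simp
    ring

theorem inner_sub_proj_proj (x y : V) : ⟪x - proj k x, proj k y⟫ = 0 := by
  rw [sub_proj, real_inner_smul_left, real_inner_comm (proj k y), inner_proj_left_self, mul_zero]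

theorem norm_sq_eq_norm_sq_proj_add (x : V) :
    ‖x‖ ^ 2 = ‖proj k x‖ ^ 2 + ‖x - proj k x‖ ^ 2 := by
  conv_lhs => rw [← add_sub_cancel (proj k x) x]
  rw [norm_add_sq_real, real_inner_comm, inner_sub_proj_proj]
  ring

theorem inner_proj_right (u x : V) : ⟪u, proj k x⟫ = ⟪proj k u, proj k x⟫ := by
  conv_lhs => rw [← add_sub_cancel (proj k u) u]
  rw [inner_add_left, inner_sub_proj_proj, add_zero]

theorem sub_proj_eq_of_inner_eq {x y : V} (h : ⟪x, k⟫ = ⟪y, k⟫) :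
    x - proj k x = y - proj k y := by
  rw [sub_proj, sub_proj, h]

theorem norm_proj_eq_of_inner_eq_of_norm_eq {x y : V} (hk : ⟪x, k⟫ = ⟪y, k⟫) (hn : ‖x‖ = ‖y‖) :
    ‖proj k x‖ = ‖proj k y‖ := by
  have h := norm_sq_eq_norm_sq_proj_add (k := k) x
  rw [hn, norm_sq_eq_norm_sq_proj_add (k := k) y, sub_proj_eq_of_inner_eq hk] at h
  exact (sq_eq_sq₀ (norm_nonneg _) (norm_nonneg _)).mp (by linarith)

/-- Rotating `v` about the axis `k` until its component in the plane normal to `k` points along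
that of `u`. -/
def twistToward (k u v : V) : V :=
  (v - proj k v) + (‖proj k v‖ / ‖proj k u‖) • proj k u

theorem inner_twistToward_left_self (u v : V) : ⟪twistToward k u v, k⟫ = ⟪v, k⟫ := by
  rw [twistToward, inner_add_left, real_inner_smul_left, inner_proj_left_self, inner_sub_left,
    inner_proj_left_self]
  ring

theorem proj_twistToward (u v : V) :
    proj k (twistToward k u v) = (‖proj k v‖ / ‖proj k u‖) • proj k u := by
  rw [← sub_sub_cancel (twistToward k u v) (proj k _),
    sub_proj_eq_of_inner_eq (inner_twistToward_left_self u v), twistToward, add_sub_cancel_left]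

theorem norm_twistToward {u : V} (hu : proj k u ≠ 0) (v : V) : ‖twistToward k u v‖ = ‖v‖ := by
  have hp : ‖proj k u‖ ≠ 0 := norm_ne_zero_iff.mpr hu
  have h := norm_sq_eq_norm_sq_proj_add (k := k) (twistToward k u v)
  rw [sub_proj_eq_of_inner_eq (inner_twistToward_left_self u v), proj_twistToward, norm_smul,
    Real.norm_of_nonneg (by positivity), div_mul_cancel₀ _ hp, ← norm_sq_eq_norm_sq_proj_add] at h
  exact (sq_eq_sq₀ (norm_nonneg _) (norm_nonneg _)).mp h

theorem inner_le_inner_twistToward {u w v : V} (hu : proj k u ≠ 0) (hk : ⟪w, k⟫ = ⟪v, k⟫)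
    (hn : ‖w‖ = ‖v‖) : ⟪u, w⟫ ≤ ⟪u, twistToward k u v⟫ := by
  have hp : ‖proj k u‖ ≠ 0 := norm_ne_zero_iff.mpr hu
  have hplanar : ⟪u, proj k w⟫ ≤ ‖proj k u‖ * ‖proj k v‖ := by
    rw [inner_proj_right, ← norm_proj_eq_of_inner_eq_of_norm_eq hk hn]
    exact real_inner_le_norm _ _
  have htwist : ⟪u, (‖proj k v‖ / ‖proj k u‖) • proj k u⟫ = ‖proj k u‖ * ‖proj k v‖ := by
    rw [real_inner_smul_right, inner_proj_right, real_inner_self_eq_norm_sq]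
    field_simp
  calc ⟪u, w⟫ = ⟪u, w - proj k w⟫ + ⟪u, proj k w⟫ := by rw [← inner_add_right, sub_add_cancel]
    _ ≤ ⟪u, v - proj k v⟫ + ‖proj k u‖ * ‖proj k v‖ := by
      rw [sub_proj_eq_of_inner_eq hk]; exact add_le_add_right hplanar _
    _ = ⟪u, twistToward k u v⟫ := by rw [twistToward, inner_add_right, htwist]

end Twist

theorem stmt0_general (u k : V) (a b : ℝ)
    (hu : proj k u ≠ 0)
    (hne : {v : V | ⟪v, k⟫ = a ∧ ‖v‖ = b}.Nonempty) :
    ∃ vstar : V, ⟪vstar, k⟫ = a ∧ ‖vstar‖ = b ∧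
      (∀ v : V, ⟪v, k⟫ = a → ‖v‖ = b → ⟪u, v⟫ ≤ ⟪u, vstar⟫) ∧
      ∃ c : ℝ, 0 ≤ c ∧ proj k vstar = c • proj k u := by
  obtain ⟨v₀, rfl, rfl⟩ := hne
  exact ⟨twistToward k u v₀, inner_twistToward_left_self u v₀, norm_twistToward hu v₀,
    fun v hvk hvn => inner_le_inner_twistToward hu hvk hvn, _, by positivity, proj_twistToward u v₀⟩

theorem stmt0 (u k : V) (hk : k ≠ 0) (a b : ℝ)
    (hu : proj k u ≠ 0)
    (hb : a ^ 2 / ‖k‖ ^ 2 < b ^ 2)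
    (hne : {v : V | ⟪v, k⟫ = a ∧ ‖v‖ = b}.Nonempty) :
    ∃ vstar : V, ⟪vstar, k⟫ = a ∧ ‖vstar‖ = b ∧
      (∀ v : V, ⟪v, k⟫ = a → ‖v‖ = b → ⟪u, v⟫ ≤ ⟪u, vstar⟫) ∧
      ∃ c : ℝ, 0 ≤ c ∧ proj k vstar = c • proj k u :=
  stmt0_general u k a b hu hne
end
end

section
/- Let k be a unit vector in ℝ³ and let u, v ∈ ℝ³ be such that their projections P(u), P(v) onto the plane orthogonal to k are both nonzero. Then there exists a rotation R about the axis k such that P(R v) is a positive scalar multiple of P(u), and for this R the inner product ⟨R v, u⟩ is maximal among all rotations about k; moreover ⟨R v, u⟩ = ⟨v,k⟩⟨u,k⟩ + ‖P(v)‖·‖P(u)‖. -/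
open scoped RealInnerProductSpace

noncomputable section

/-! Decompose vectors along `k` and the plane `kᗮ`. An isometry fixing `k` preserves the
`k`-component and commutes with the projection, so `⟪S v, u⟫ = ⟪v, k⟫⟪u, k⟫ + ⟪S (P v), P u⟫`,
and Cauchy–Schwarz bounds the second term by `‖P v‖‖P u‖`, with equality when `S (P v)` is a
positive multiple of `P u`. A rotation doing this is a product of two reflections: one in the
hyperplane orthogonal to `P v - c • P u` (which swaps these vectors of equal length and fixes
`k`), and one in a hyperplane containing both `k` and `P u`. -/

open Module Submodule

section

variable {E : Type*} [NormedAddCommGroup E] [InnerProductSpace ℝ E]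

theorem inner_map_eq_of_map_eq {k : E} (S : E ≃ₗᵢ[ℝ] E) (hS : S k = k) (x : E) :
    ⟪S x, k⟫ = ⟪x, k⟫ := by
  simpa [hS] using S.inner_map_map x k

variable [FiniteDimensional ℝ E]

theorem det_reflection_orthogonal_singleton {w : E} (hw : w ≠ 0) :
    LinearMap.det (ℝ ∙ w)ᗮ.reflection.toLinearMap = -1 := by
  rw [det_reflection, orthogonal_orthogonal, finrank_span_singleton hw, pow_one]

theorem exists_ne_zero_inner_eq_zero_pair (hE : 2 < finrank ℝ E) (a c : E) :
    ∃ w ≠ 0, ⟪w, a⟫ = 0 ∧ ⟪w, c⟫ = 0 := by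
  classical
  have hK : span ℝ ({a, c} : Set E) ≠ ⊤ := by
    intro h
    have hle := finrank_span_le_card (R := ℝ) ({a, c} : Set E)
    rw [h, finrank_top] at hle
    have h2 : ({a, c} : Set E).toFinset.card ≤ 2 := by
      simpa using Finset.card_insert_le a {c}
    omega
  obtain ⟨w, hwK, hw⟩ := exists_mem_ne_zero_of_ne_bot (orthogonal_eq_bot_iff.not.mpr hK)
  exact ⟨w, hw, inner_left_of_mem_orthogonal (subset_span (by simp)) hwK,
    inner_left_of_mem_orthogonal (subset_span (by simp)) hwK⟩

theorem exists_linearIsometryEquiv_fix_map_det_eq_one (hE : 2 < finrank ℝ E) {a b c : E}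
    (hb : ⟪b, a⟫ = 0) (hc : ⟪c, a⟫ = 0) (hbc : ‖b‖ = ‖c‖) :
    ∃ R : E ≃ₗᵢ[ℝ] E, R a = a ∧ R b = c ∧ LinearMap.det (R.toLinearEquiv : E →ₗ[ℝ] E) = 1 := by
  rcases eq_or_ne b c with rfl | hne
  · exact ⟨LinearIsometryEquiv.refl ℝ E, rfl, rfl, LinearMap.det_id⟩
  obtain ⟨w, hw, hwa, hwc⟩ := exists_ne_zero_inner_eq_zero_pair hE a c
  let σ := (ℝ ∙ (b - c))ᗮ.reflection
  let τ := (ℝ ∙ w)ᗮ.reflection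
  have hσa : σ a = a := reflection_mem_subspace_eq_self <|
    mem_orthogonal_singleton_iff_inner_right.mpr (by rw [inner_sub_left, hb, hc, sub_zero])
  have hτ {x : E} (hx : ⟪w, x⟫ = 0) : τ x = x :=
    reflection_mem_subspace_eq_self (mem_orthogonal_singleton_iff_inner_right.mpr hx)
  refine ⟨σ.trans τ, ?_, ?_, ?_⟩
  · simp only [LinearIsometryEquiv.trans_apply, hσa, hτ hwa]
  · simp only [LinearIsometryEquiv.trans_apply, σ, reflection_sub hbc, hτ hwc]
  · change LinearMap.det (τ.toLinearMap ∘ₗ σ.toLinearMap) = 1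
    rw [LinearMap.det_comp, det_reflection_orthogonal_singleton hw,
      det_reflection_orthogonal_singleton (sub_ne_zero.mpr hne)]
    norm_num

end

theorem proj_eq_sub_inner_smul {k : V} (hk : ‖k‖ = 1) (x : V) : proj k x = x - ⟪x, k⟫ • k := by
  simp [proj, hk]

theorem inner_proj_eq_zero (k x : V) : ⟪proj k x, k⟫ = 0 := by
  rcases eq_or_ne k 0 with rfl | hk
  · exact inner_zero_right _
  rw [proj, inner_sub_left, real_inner_smul_left, real_inner_self_eq_norm_sq,
    div_mul_cancel₀ _ (pow_ne_zero 2 (norm_ne_zero_iff.mpr hk)), sub_self]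

theorem inner_eq_inner_mul_add_inner_proj {k : V} (hk : ‖k‖ = 1) (x y : V) :
    ⟪x, y⟫ = ⟪x, k⟫ * ⟪y, k⟫ + ⟪proj k x, proj k y⟫ := by
  rw [proj_eq_sub_inner_smul hk y, inner_sub_right, real_inner_smul_right, inner_proj_eq_zero,
    mul_zero, sub_zero, proj_eq_sub_inner_smul hk x, inner_sub_left, real_inner_smul_left,
    real_inner_comm k y]
  ring

theorem proj_map_of_map_eq {k : V} (S : V ≃ₗᵢ[ℝ] V) (hS : S k = k) (x : V) :
    proj k (S x) = S (proj k x) := by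
  rw [proj, proj, inner_map_eq_of_map_eq S hS, map_sub, map_smul, hS]

theorem inner_map_le_of_map_eq {k : V} (hk : ‖k‖ = 1) (S : V ≃ₗᵢ[ℝ] V) (hS : S k = k) (u v : V) :
    ⟪S v, u⟫ ≤ ⟪v, k⟫ * ⟪u, k⟫ + ‖proj k v‖ * ‖proj k u‖ :=
  calc ⟪S v, u⟫ = ⟪v, k⟫ * ⟪u, k⟫ + ⟪S (proj k v), proj k u⟫ := by
        rw [inner_eq_inner_mul_add_inner_proj hk, inner_map_eq_of_map_eq S hS,
          proj_map_of_map_eq S hS]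
    _ ≤ ⟪v, k⟫ * ⟪u, k⟫ + ‖S (proj k v)‖ * ‖proj k u‖ := by gcongr; exact real_inner_le_norm _ _
    _ = ⟪v, k⟫ * ⟪u, k⟫ + ‖proj k v‖ * ‖proj k u‖ := by rw [S.norm_map]

theorem stmt4 (k : V) (hk : ‖k‖ = 1) (u v : V)
    (hu : proj k u ≠ 0) (hv : proj k v ≠ 0) :
    ∃ R : V ≃ₗᵢ[ℝ] V, IsRotationAbout k R ∧
      (∃ c : ℝ, 0 < c ∧ proj k (R v) = c • proj k u) ∧
      (∀ S : V ≃ₗᵢ[ℝ] V, IsRotationAbout k S → ⟪S v, u⟫ ≤ ⟪R v, u⟫) ∧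
      ⟪R v, u⟫ = ⟪v, k⟫ * ⟪u, k⟫ + ‖proj k v‖ * ‖proj k u‖ := by
  set p := proj k v
  set q := proj k u
  have hq : 0 < ‖q‖ := norm_pos_iff.mpr hu
  set c := ‖p‖ / ‖q‖
  have hc : 0 < c := div_pos (norm_pos_iff.mpr hv) hq
  have hcq : ‖p‖ = ‖c • q‖ := by
    rw [norm_smul, Real.norm_of_nonneg hc.le, div_mul_cancel₀ _ hq.ne']
  have hcqk : ⟪c • q, k⟫ = 0 := by rw [real_inner_smul_left, inner_proj_eq_zero, mul_zero]
  obtain ⟨R, hRk, hRp, hRdet⟩ :=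
    exists_linearIsometryEquiv_fix_map_det_eq_one (by simp) (inner_proj_eq_zero k v) hcqk hcq
  have hRv : proj k (R v) = c • q := by rw [proj_map_of_map_eq R hRk, hRp]
  have hvalue : ⟪R v, u⟫ = ⟪v, k⟫ * ⟪u, k⟫ + ‖p‖ * ‖q‖ := by
    rw [inner_eq_inner_mul_add_inner_proj hk, hRv, inner_map_eq_of_map_eq R hRk,
      real_inner_smul_left, real_inner_self_eq_norm_sq, sq, ← mul_assoc, div_mul_cancel₀ _ hq.ne']
  refine ⟨R, ⟨hRk, hRdet⟩, ⟨c, hc, hRv⟩, fun S hS => ?_, hvalue⟩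
  rw [hvalue]
  exact inner_map_le_of_map_eq hk S hS.1 u v
end
end
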